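/- arXiv:math/0112054 — 6 statements merged into one kernel-verified Lean document; each statement's English description precedes it below -/
import Mathlib

section
/- For indeterminates x_1, …, x_t, the determinant of the t×t matrix whose (i,j) entry is the generalized binomial coefficient C(x_j, i) (for 1 ≤ i, j ≤ t) equals (∏_{j=1}^{t} x_j) · (∏_{1≤i<j≤t} (x_j − x_i)) / (∏_{k=1}^{t} k!), as an identity of polynomials in ℚ[x_1,…,x_t]. -/
/-!
Since `x (x - 1) ⋯ (x - i) = x · P_i(x - 1)` with `P_i` the falling factorial of degree `i`,
the entry `C(x_j, i + 1)` is `x_j · P_i(x_j - 1) / (i + 1)!`. Taking the factors `1 / (i + 1)!`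
out of the rows and `x_j` out of the columns leaves the determinant of the monic polynomials
`P_0, …, P_{t-1}` evaluated at the points `x_j - 1`, which equals the Vandermonde determinant of
these points; their pairwise differences are those of the `x_j`.
-/

/-- Generalized binomial coefficient `C(x,k) = x(x-1)⋯(x-k+1)/k!` in a commutative ℚ-algebra. -/
noncomputable def gbinom {R : Type*} [CommRing R] [Algebra ℚ R] (x : R) (k : ℕ) : R :=
  algebraMap ℚ R ((k.factorial : ℚ)⁻¹) * ∏ i ∈ Finset.range k, (x - (i : R))

open Polynomial Finset Matrix

variable {R : Type*} [CommRing R]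

theorem monic_descPochhammer_of_commRing (n : ℕ) : (descPochhammer R n).Monic := by
  rw [← descPochhammer_map (Int.castRingHom R)]
  exact (monic_descPochhammer ℤ n).map _

theorem natDegree_descPochhammer_of_nontrivial [Nontrivial R] (n : ℕ) :
    (descPochhammer R n).natDegree = n := by
  rw [← descPochhammer_map (Int.castRingHom R), (monic_descPochhammer ℤ n).natDegree_map,
    descPochhammer_natDegree]

theorem det_descPochhammer_eval {t : ℕ} (x : Fin t → R) :
    det (of fun i j : Fin t => (descPochhammer R i).eval (x j)) =
      ∏ i : Fin t, ∏ j ∈ Ioi i, (x j - x i) := by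
  nontriviality R
  rw [← det_vandermonde, det_eval_matrixOfPolynomials_eq_det_vandermonde x _
    (fun i => natDegree_descPochhammer_of_nontrivial i)
    (fun i => monic_descPochhammer_of_commRing i), ← det_transpose]
  rfl

variable [Algebra ℚ R]

theorem gbinom_succ (x : R) (k : ℕ) :
    gbinom x (k + 1) =
      algebraMap ℚ R ((k + 1).factorial : ℚ)⁻¹ *
        (x * (descPochhammer R k).eval (x - 1)) := by
  rw [gbinom, descPochhammer_eval_eq_prod_range, prod_range_succ']
  simp only [Nat.cast_add, Nat.cast_one, Nat.cast_zero, sub_zero, sub_add_eq_sub_sub_swap]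
  ring

theorem det_gbinom_succ {t : ℕ} (x : Fin t → R) :
    det (of fun i j : Fin t => gbinom (x j) ((i : ℕ) + 1)) =
      algebraMap ℚ R (∏ k ∈ range t, ((k + 1).factorial : ℚ))⁻¹ * (∏ j, x j) *
        ∏ i : Fin t, ∏ j ∈ Ioi i, (x j - x i) := by
  calc det (of fun i j : Fin t => gbinom (x j) ((i : ℕ) + 1))
      = (∏ i : Fin t, algebraMap ℚ R ((i + 1 : ℕ).factorial : ℚ)⁻¹) *
          ((∏ j, x j) * det (of fun i j : Fin t => (descPochhammer R i).eval (x j - 1))) := by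
        rw [← det_mul_row, ← det_mul_column]
        simp only [gbinom_succ, of_apply]
    _ = _ := by
        rw [det_descPochhammer_eval, ← map_prod, ← prod_inv_distrib,
          ← Fin.prod_univ_eq_prod_range (fun k => ((k + 1).factorial : ℚ)⁻¹)]
        simp only [sub_sub_sub_cancel_right, mul_assoc]

open MvPolynomial in
theorem binomial_vandermonde_det (t : ℕ) :
    (Matrix.det (fun i j : Fin t => gbinom (X j : MvPolynomial (Fin t) ℚ) ((i : ℕ) + 1))) =
      MvPolynomial.C ((∏ k ∈ Finset.range t, ((k + 1).factorial : ℚ))⁻¹) *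
        (∏ j : Fin t, X j) *
        ∏ i : Fin t, ∏ j ∈ Finset.Ioi i, (X j - X i) :=
  det_gbinom_succ X
end

section
/- With A as in the binomial determinant setting (bt×bt matrix with entries C(x_s, a+c+r−1)), for every 1 ≤ i ≤ t and every 1 ≤ k ≤ b−1, the polynomial (x_i + k)^{b−k} divides det A in ℚ[x_1,…,x_t]. -/
/-- The `bt × bt` matrix `A`: rows indexed by `p = (p₁,p₂)` encoding `r - 1 = b·p₁ + p₂`,
columns indexed by `(s, c)` with `1 ≤ s ≤ t`, `0 ≤ c ≤ b-1`, with entry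
`C(x_s, a + c + r - 1)`. -/
noncomputable def binomMatrix (a b t : ℕ) :
    Matrix (Fin t × Fin b) (Fin t × Fin b) (MvPolynomial (Fin t) ℚ) :=
  fun p col =>
    gbinom (MvPolynomial.X col.1) (a + (col.2 : ℕ) + (b * (p.1 : ℕ) + (p.2 : ℕ)))

/-- The polynomial (or scalar) `H(x_1,…,x_t)` from the appendix. -/
noncomputable def Hfun {R : Type*} [CommRing R] (a b t : ℕ) (x : Fin t → R) : R :=
  (∏ i : Fin t,
      ((∏ j ∈ Finset.Icc 1 (b - 1), (x i + (j : R)) ^ (b - j)) *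
        (∏ j ∈ Finset.range a, (x i - (j : R)) ^ b) *
        ∏ j ∈ Finset.Icc 1 (b - 1), (x i - (a : R) + 1 - (j : R)) ^ (b - j))) *
    ∏ p ∈ Finset.univ.filter (fun p : Fin t × Fin t => p.1 < p.2),
      ∏ k ∈ Finset.Icc (-(b : ℤ) + 1) ((b : ℤ) - 1),
        (x p.1 - x p.2 + (k : R)) ^ (b - k.natAbs)

open Finset Matrix
open scoped Kronecker

section gbinom

variable {R : Type*} [CommRing R] [Algebra ℚ R]

theorem gbinom_add_gbinom_succ (x : R) (n : ℕ) :
    gbinom x n + gbinom x (n + 1) = gbinom (x + 1) (n + 1) := by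
  have hprod :
      ∏ j ∈ range (n + 1), (x + 1 - (j : R)) = (x + 1) * ∏ j ∈ range n, (x - (j : R)) := by
    rw [prod_range_succ']
    push_cast
    simp only [add_sub_add_right_eq_sub, sub_zero]
    ring
  have hfact : ((n.factorial : ℚ))⁻¹ = ((n + 1 : ℕ) : ℚ) * (((n + 1).factorial : ℚ))⁻¹ := by
    rw [Nat.factorial_succ, Nat.cast_mul, mul_inv, ← mul_assoc, mul_inv_cancel₀ (by positivity),
      one_mul]
  rw [gbinom, gbinom, gbinom, prod_range_succ, hprod, hfact, map_mul, map_natCast]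
  push_cast
  ring

theorem sum_range_choose_mul_gbinom (x : R) (n k : ℕ) :
    ∑ m ∈ range (k + 1), (k.choose m : R) * gbinom x (n + m) = gbinom (x + k) (n + k) := by
  induction k generalizing x n with
  | zero => simp
  | succ k ih =>
    rw [sum_choose_succ_mul (fun m _ => gbinom x (n + m)) k, ← sum_add_distrib]
    simp only [← mul_add, ← add_assoc, gbinom_add_gbinom_succ]
    simp only [add_right_comm n _ 1, ih]
    congr 1
    push_cast
    ring

theorem self_dvd_gbinom (x : R) {n : ℕ} (hn : n ≠ 0) : x ∣ gbinom x n := by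
  have : x - ((0 : ℕ) : R) ∣ ∏ j ∈ range n, (x - (j : R)) :=
    dvd_prod_of_mem _ (mem_range.2 (Nat.pos_of_ne_zero hn))
  simpa [gbinom] using this.mul_left _

end gbinom

theorem Matrix.pow_card_dvd_det_of_dvd_col {n R : Type*} [Fintype n] [DecidableEq n] [CommRing R]
    (M : Matrix n n R) (d : R) (S : Finset n) (h : ∀ i, ∀ j ∈ S, d ∣ M i j) :
    d ^ S.card ∣ M.det := by
  induction S using Finset.induction_on generalizing M with
  | empty => simp
  | insert j S hj ih =>
    choose u hu using fun i => h i j (mem_insert_self j S)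
    have hM : M = M.updateCol j (d • u) := by
      ext i j'
      obtain rfl | hj' := eq_or_ne j' j
      · simp [hu]
      · rw [updateCol_ne hj']
    rw [hM, det_updateCol_smul, card_insert_of_notMem hj, pow_succ']
    refine mul_dvd_mul_left d (ih _ fun i j' hj' => ?_)
    rw [updateCol_ne (ne_of_mem_of_not_mem hj' hj)]
    exact h i j' (mem_insert_of_mem hj')

def binomToeplitz (R : Type*) [Semiring R] (b k : ℕ) : Matrix (Fin b) (Fin b) R :=
  of fun c c' => if c' ≤ c then ((k.choose (c - c') : ℕ) : R) else 0

theorem det_binomToeplitz {R : Type*} [CommRing R] (b k : ℕ) : (binomToeplitz R b k).det = 1 := by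
  rw [det_of_isLowerTriangular _ fun c c' (h : c < c') => by simp [binomToeplitz, not_le.2 h]]
  simp [binomToeplitz]

theorem sum_mul_binomToeplitz {R : Type*} [CommSemiring R] (b k : ℕ) (f : ℕ → R) (c : Fin b)
    (hc : c + k < b) :
    ∑ c' : Fin b, f c' * binomToeplitz R b k c' c =
      ∑ m ∈ range (k + 1), (k.choose m : R) * f (c + m) := by
  obtain ⟨l, hl⟩ : ∃ l, b = c + (k + 1 + l) := ⟨b - (c + k + 1), by omega⟩
  have hrange : range b = range (c + (k + 1 + l)) := congrArg range hl
  simp only [binomToeplitz, of_apply, Fin.le_iff_val_le_val]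
  rw [Fin.sum_univ_eq_sum_range (fun c' => f c' * if c ≤ c' then (k.choose (c' - c) : R) else 0),
    hrange, sum_range_add, sum_range_add]
  have hlow : ∑ c' ∈ range c, f c' * (if c ≤ c' then (k.choose (c' - c) : R) else 0) = 0 :=
    sum_eq_zero fun c' hc' => by simp [not_le.2 (mem_range.1 hc')]
  have hhigh : ∑ m ∈ range l, f (c + (k + 1 + m)) *
      (if c ≤ c + (k + 1 + m) then (k.choose (c + (k + 1 + m) - c) : R) else 0) = 0 :=
    sum_eq_zero fun m _ => by simp [Nat.choose_eq_zero_of_lt (by omega : k < k + 1 + m)]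
  rw [hlow, hhigh, zero_add, add_zero]
  exact sum_congr rfl fun m _ => by simp [mul_comm]

open MvPolynomial in
theorem binomMatrix_mul_one_kronecker_binomToeplitz_apply (a b t k : ℕ) (p : Fin t × Fin b)
    (s : Fin t) (c : Fin b) (hc : c + k < b) :
    (binomMatrix a b t * 1 ⊗ₖ binomToeplitz _ b k : Matrix _ _ _) p (s, c) =
      gbinom (X s + (k : MvPolynomial (Fin t) ℚ)) (a + c + (b * p.1 + p.2) + k) := by
  rw [mul_apply, Fintype.sum_prod_type]
  simp only [kroneckerMap_apply, one_apply, ite_mul, one_mul, zero_mul, mul_ite, mul_zero,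
    sum_ite_irrel, sum_const_zero, sum_ite_eq', mem_univ, ↓reduceIte]
  refine (sum_mul_binomToeplitz b k
    (fun n => gbinom (X s : MvPolynomial (Fin t) ℚ) (a + n + (b * p.1 + p.2))) c hc).trans ?_
  rw [← sum_range_choose_mul_gbinom]
  exact sum_congr rfl fun m _ => by congr 2; omega

open MvPolynomial in
theorem binom_det_divisibility_shift_general (a b t : ℕ)
    (i : Fin t) (k : ℕ) (hk1 : 1 ≤ k) :
    (MvPolynomial.X i + (k : MvPolynomial (Fin t) ℚ)) ^ (b - k) ∣
      (binomMatrix a b t).det := by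
  set E : Matrix (Fin t × Fin b) (Fin t × Fin b) (MvPolynomial (Fin t) ℚ) :=
    1 ⊗ₖ binomToeplitz _ b k
  have hdet : (binomMatrix a b t * E).det = (binomMatrix a b t).det := by
    rw [det_mul, det_kronecker, det_one, det_binomToeplitz, one_pow, one_pow, mul_one, mul_one]
  have hcols : ∀ p, ∀ q ∈ {i} ×ˢ univ.map (Fin.castLEEmb (Nat.sub_le b k)),
      X i + (k : MvPolynomial (Fin t) ℚ) ∣ (binomMatrix a b t * E) p q := by
    rintro p ⟨s, c⟩ hq
    obtain ⟨⟨j, rfl⟩, rfl⟩ : (∃ j, Fin.castLE _ j = c) ∧ i = s := by simpa using hq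
    rw [binomMatrix_mul_one_kronecker_binomToeplitz_apply _ _ _ _ _ _ _ (by simp; omega)]
    exact self_dvd_gbinom _ (by omega)
  simpa [hdet] using pow_card_dvd_det_of_dvd_col _ _ _ hcols

theorem binom_det_divisibility_shift (a b t : ℕ) (ha : 1 ≤ a) (hb : 1 ≤ b) (ht : 1 ≤ t)
    (i : Fin t) (k : ℕ) (hk1 : 1 ≤ k) (hk2 : k ≤ b - 1) :
    (MvPolynomial.X i + (k : MvPolynomial (Fin t) ℚ)) ^ (b - k) ∣
      (binomMatrix a b t).det :=
  binom_det_divisibility_shift_general a b t i k hk1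
end

section
/- With A as in the binomial determinant setting, for every 1 ≤ i ≤ t, the polynomial ∏_{j=0}^{a−1} (x_i − j)^{b} · ∏_{j=1}^{b−1} (x_i − a + 1 − j)^{b−j} divides det A in ℚ[x_1,…,x_t]. -/
/-!
Every entry `C(x_i, a + c + r)` of column `(i, c)` is a scalar multiple of the falling factorial
`x_i (x_i - 1) ⋯ (x_i - a - c - r + 1)`, hence divisible by `∏_{m < a + c} (x_i - m)`.
Pulling these factors out of the `b` columns belonging to `x_i` shows that
`∏_{c < b} ∏_{m < a + c} (x_i - m)` divides `det A`, and regrouping this product by the root `m`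
gives the stated polynomial.
-/

open Finset

theorem Matrix.prod_dvd_det_of_forall_dvd {n R : Type*} [Fintype n] [DecidableEq n] [CommRing R]
    (A : Matrix n n R) (d : n → R) (h : ∀ i j, d j ∣ A i j) : ∏ j, d j ∣ A.det := by
  choose B hB using h
  have hA : A = Matrix.of fun i j => d j * Matrix.of B i j := by ext i j; exact hB i j
  rw [hA, Matrix.det_mul_row]
  exact dvd_mul_right _ _

theorem prod_range_sub_dvd_gbinom {R : Type*} [CommRing R] [Algebra ℚ R] (x : R) {k n : ℕ}
    (hkn : k ≤ n) : ∏ m ∈ range k, (x - (m : R)) ∣ gbinom x n :=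
  (prod_dvd_prod_of_subset _ _ _ (range_subset_range.mpr hkn)).mul_left _

theorem prod_range_prod_range_eq_prod_pow {M : Type*} [CommMonoid M] (g : ℕ → M) (b : ℕ) :
    ∏ c ∈ range b, ∏ m ∈ range c, g m = ∏ m ∈ range b, g m ^ (b - 1 - m) := by
  induction b with
  | zero => simp
  | succ b ih =>
    rw [prod_range_succ, ih, prod_range_succ _ b, Nat.add_sub_cancel, Nat.sub_self, pow_zero,
      mul_one, ← prod_mul_distrib]
    refine prod_congr rfl fun m hm => ?_
    rw [← pow_succ]
    have := mem_range.mp hm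
    congr 1
    omega

theorem prod_range_prod_range_add_eq {M : Type*} [CommMonoid M] (f : ℕ → M) (a b : ℕ) :
    ∏ c ∈ range b, ∏ m ∈ range (a + c), f m =
      (∏ m ∈ range a, f m) ^ b * ∏ j ∈ Icc 1 (b - 1), f (a + (j - 1)) ^ (b - j) := by
  simp_rw [prod_range_add, prod_mul_distrib, prod_const, card_range,
    prod_range_prod_range_eq_prod_pow]
  congr 1
  have hlast : ∀ j ∈ Icc 1 b, j ∉ Icc 1 (b - 1) → f (a + (j - 1)) ^ (b - j) = 1 := by
    intro j hj hj'
    simp only [mem_Icc] at hj hj'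
    rw [show b - j = 0 by omega, pow_zero]
  rw [prod_subset (Icc_subset_Icc_right (Nat.sub_le b 1)) hlast, ← Ico_add_one_right_eq_Icc,
    prod_Ico_eq_prod_range, Nat.add_sub_cancel]
  refine prod_congr rfl fun m _ => ?_
  rw [Nat.add_sub_cancel_left, Nat.sub_sub, add_comm 1 m]

theorem binom_det_divisibility_roots_general (a b t : ℕ)
    (i : Fin t) :
    ((∏ j ∈ Finset.range a, (MvPolynomial.X i - (j : MvPolynomial (Fin t) ℚ)) ^ b) *
        ∏ j ∈ Finset.Icc 1 (b - 1),
          (MvPolynomial.X i - (a : MvPolynomial (Fin t) ℚ) + 1 -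
              (j : MvPolynomial (Fin t) ℚ)) ^ (b - j)) ∣
      (binomMatrix a b t).det := by
  set x : MvPolynomial (Fin t) ℚ := MvPolynomial.X i
  let fallingFactor (k : ℕ) : MvPolynomial (Fin t) ℚ := ∏ m ∈ range k, (x - (m : _))
  let d : Fin t × Fin b → MvPolynomial (Fin t) ℚ := fun col =>
    if col.1 = i then fallingFactor (a + col.2) else 1
  have hd : ∀ p col, d col ∣ binomMatrix a b t p col := by
    rintro p ⟨s, c⟩
    by_cases hs : s = i
    · subst hs
      simpa [d, binomMatrix] using prod_range_sub_dvd_gbinom x (Nat.le_add_right _ _)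
    · simp [d, hs]
  have hprod : ∏ col, d col = ∏ c ∈ range b, fallingFactor (a + c) := by
    rw [Fintype.prod_prod_type, prod_eq_single i (fun s _ hs => by simp [d, hs]) (by simp)]
    simp only [d, if_true]
    exact Fin.prod_univ_eq_prod_range (fun c => fallingFactor (a + c)) b
  convert (binomMatrix a b t).prod_dvd_det_of_forall_dvd d hd using 1
  rw [hprod, prod_range_prod_range_add_eq, prod_pow]
  congr 1
  refine prod_congr rfl fun j hj => ?_
  rw [Nat.cast_add, Nat.cast_sub (mem_Icc.mp hj).1]
  ring

theorem binom_det_divisibility_roots (a b t : ℕ) (ha : 1 ≤ a) (hb : 1 ≤ b) (ht : 1 ≤ t)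
    (i : Fin t) :
    ((∏ j ∈ Finset.range a, (MvPolynomial.X i - (j : MvPolynomial (Fin t) ℚ)) ^ b) *
        ∏ j ∈ Finset.Icc 1 (b - 1),
          (MvPolynomial.X i - (a : MvPolynomial (Fin t) ℚ) + 1 -
              (j : MvPolynomial (Fin t) ℚ)) ^ (b - j)) ∣
      (binomMatrix a b t).det :=
  binom_det_divisibility_roots_general a b t i
end

section
/- With A as in the binomial determinant setting, evaluating A at x_i = a + (t+1−i)b − 1 for i = 1,…,t yields a matrix whose determinant equals (−1)^{bt(bt−1)/2}; in fact this evaluation is an upper-left anti-triangular matrix with all anti-diagonal entries equal to 1 and all entries below the anti-diagonal equal to 0. -/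
/-- The binomial matrix `A` evaluated at `x_s = a + (t - s + 1)·b - 1` (with `s` one-based),
i.e. at `x_s = a + (t - s₀)·b - 1` for the zero-based column index `s₀`. -/
noncomputable def binomMatrixEval (a b t : ℕ) : Matrix (Fin t × Fin b) (Fin t × Fin b) ℚ :=
  fun p col =>
    gbinom ((a : ℚ) + ((t - (col.1 : ℕ) : ℕ) : ℚ) * b - 1)
      (a + (col.2 : ℕ) + (b * (p.1 : ℕ) + (p.2 : ℕ)))

theorem gbinom_natCast {R : Type*} [CommRing R] [Algebra ℚ R] (N k : ℕ) :
    gbinom (N : R) k = N.choose k := by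
  have hfac : algebraMap ℚ R ((k.factorial : ℚ)⁻¹) * (k.factorial : R) = 1 := by
    rw [← map_natCast (algebraMap ℚ R), ← map_mul,
      inv_mul_cancel₀ (Nat.cast_ne_zero.mpr k.factorial_ne_zero), map_one]
  rw [gbinom, ← descPochhammer_eval_eq_prod_range, descPochhammer_eval_eq_descFactorial,
    Nat.descFactorial_eq_factorial_mul_choose, Nat.cast_mul, ← mul_assoc, hfac, one_mul]

namespace Matrix

/-- Expanding along the last row, whose only nonzero entry is the `1` in column `0`. -/
theorem det_eq_neg_one_pow_of_antitriangular {R : Type*} [CommRing R] :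
    ∀ (n : ℕ) (M : Matrix (Fin n) (Fin n) R),
      (∀ i j : Fin n, (i : ℕ) + j = n - 1 → M i j = 1) →
      (∀ i j : Fin n, n - 1 < (i : ℕ) + j → M i j = 0) →
      M.det = (-1) ^ (n * (n - 1) / 2)
  | 0, M, _, _ => by simp
  | n + 1, M, h1, h0 => by
    have hminor := det_eq_neg_one_pow_of_antitriangular n
      (M.submatrix (Fin.last n).succAbove (0 : Fin (n + 1)).succAbove)
      (fun i j hij => h1 _ _ (by simp; omega)) (fun i j hij => h0 _ _ (by simp; omega))
    rw [det_succ_row M (Fin.last n), Finset.sum_eq_single 0 (fun j _ hj => ?_) (by simp),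
      h1 _ _ (by simp), hminor]
    · have hexp : (n + 1) * n / 2 = n + n * (n - 1) / 2 := by
        have := Nat.triangle_succ n
        simp only [Nat.add_sub_cancel] at this
        omega
      simp [hexp, pow_add]
    · have hj : (j : ℕ) ≠ 0 := Fin.val_ne_zero_iff.mpr hj
      rw [h0 (Fin.last n) j (by rw [Fin.val_last]; omega)]
      ring

theorem det_eq_neg_one_pow_of_antitriangular_of_equiv {R ι : Type*} [CommRing R]
    [Fintype ι] [DecidableEq ι] {n : ℕ} (e : ι ≃ Fin n) (M : Matrix ι ι R)
    (h1 : ∀ i j, (e i : ℕ) + e j = n - 1 → M i j = 1)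
    (h0 : ∀ i j, n - 1 < (e i : ℕ) + e j → M i j = 0) :
    M.det = (-1) ^ (n * (n - 1) / 2) := by
  rw [← det_submatrix_equiv_self e.symm]
  exact det_eq_neg_one_pow_of_antitriangular n _ (fun i j h => h1 _ _ (by simpa using h))
    (fun i j h => h0 _ _ (by simpa using h))

end Matrix

theorem binomMatrixEval_apply_eq_choose (a b t : ℕ) (p col : Fin t × Fin b) :
    binomMatrixEval a b t p col =
      ((a + col.2 + (b * t - 1 - (b * col.1 + col.2))).choose
        (a + col.2 + (b * p.1 + p.2)) : ℚ) := by
  have hcol : b * col.1 + b ≤ b * t := Nat.mul_le_mul_left b col.1.2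
  have hpos : 1 ≤ a + (t - col.1) * b := by
    have := Nat.mul_pos (Nat.sub_pos_of_lt col.1.2) col.2.pos
    omega
  have hupper : a + (t - col.1) * b - 1 = a + col.2 + (b * t - 1 - (b * col.1 + col.2)) := by
    have := col.2.2
    rw [Nat.sub_mul, mul_comm t, mul_comm (col.1 : ℕ)]
    omega
  rw [← hupper, ← gbinom_natCast, Nat.cast_sub hpos]
  simp [binomMatrixEval]

theorem binom_det_evaluation_general (a b t : ℕ) :
    (binomMatrixEval a b t).det = (-1 : ℚ) ^ (b * t * (b * t - 1) / 2) ∧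
      (∀ p col : Fin t × Fin b,
          (b * (p.1 : ℕ) + (p.2 : ℕ)) + (b * (col.1 : ℕ) + (col.2 : ℕ)) = b * t - 1 →
          binomMatrixEval a b t p col = 1) ∧
      (∀ p col : Fin t × Fin b,
          (b * (p.1 : ℕ) + (p.2 : ℕ)) + (b * (col.1 : ℕ) + (col.2 : ℕ)) > b * t - 1 →
          binomMatrixEval a b t p col = 0) := by
  have antidiag : ∀ p col : Fin t × Fin b,
      (b * (p.1 : ℕ) + (p.2 : ℕ)) + (b * (col.1 : ℕ) + (col.2 : ℕ)) = b * t - 1 →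
      binomMatrixEval a b t p col = 1 := by
    intro p col h
    rw [binomMatrixEval_apply_eq_choose,
      show b * t - 1 - (b * col.1 + col.2) = b * p.1 + p.2 by omega, Nat.choose_self, Nat.cast_one]
  have below : ∀ p col : Fin t × Fin b,
      (b * (p.1 : ℕ) + (p.2 : ℕ)) + (b * (col.1 : ℕ) + (col.2 : ℕ)) > b * t - 1 →
      binomMatrixEval a b t p col = 0 := by
    intro p col h
    have hcol := (finProdFinEquiv col).isLt
    rw [finProdFinEquiv_apply_val, mul_comm t] at hcol
    rw [binomMatrixEval_apply_eq_choose, Nat.choose_eq_zero_of_lt (by omega), Nat.cast_zero]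
  refine ⟨?_, antidiag, below⟩
  rw [mul_comm b t]
  refine Matrix.det_eq_neg_one_pow_of_antitriangular_of_equiv finProdFinEquiv _
    (fun p col h => antidiag p col ?_) (fun p col h => below p col ?_) <;>
  rw [finProdFinEquiv_apply_val, finProdFinEquiv_apply_val, mul_comm t] at h <;> omega

theorem binom_det_evaluation (a b t : ℕ) (ha : 1 ≤ a) (hb : 1 ≤ b) (ht : 1 ≤ t) :
    (binomMatrixEval a b t).det = (-1 : ℚ) ^ (b * t * (b * t - 1) / 2) ∧
      (∀ p col : Fin t × Fin b,
          (b * (p.1 : ℕ) + (p.2 : ℕ)) + (b * (col.1 : ℕ) + (col.2 : ℕ)) = b * t - 1 →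
          binomMatrixEval a b t p col = 1) ∧
      (∀ p col : Fin t × Fin b,
          (b * (p.1 : ℕ) + (p.2 : ℕ)) + (b * (col.1 : ℕ) + (col.2 : ℕ)) > b * t - 1 →
          binomMatrixEval a b t p col = 0) :=
  binom_det_evaluation_general a b t
end

section
/- Let G be a finite group acting on the right on a finite set S, and let α : G × G → (S → ℂˣ) be a map satisfying the twisted 2-cocycle condition α_{s·c⁻¹}(a,b) · α_s(ab, c) = α_s(a, bc) · α_s(b, c) for all a,b,c ∈ G and s ∈ S, together with the normalization α_s(1,b) = α_s(a,1) = 1. Then the vector space 𝒜 = ℂ[G] ⊗ ℂ^S with basis {a ⊗ e_s : a ∈ G, s ∈ S}, equipped with the product (a ⊗ e_s)·(b ⊗ e_t) = α_t(a,b) · δ_{s·b, t} · (ab ⊗ e_t), is an associative ℂ-algebra with identity element ∑_{s∈S} 1 ⊗ e_s. -/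
theorem generalized_twisted_double_assoc
    {G S : Type*} [Group G] [Fintype G] [Fintype S] [DecidableEq G]
    (act : S → G → S) (hact1 : ∀ s, act s 1 = s)
    (hactm : ∀ s a b, act (act s a) b = act s (a * b))
    (α : G → G → S → ℂˣ)
    (hcoc : ∀ a b c : G, ∀ s : S,
      α a b (act s c⁻¹) * α (a * b) c s = α a (b * c) s * α b c s)
    (hnorml : ∀ b : G, ∀ s : S, α 1 b s = 1)
    (hnormr : ∀ a : G, ∀ s : S, α a 1 s = 1)
    (mul : (G × S → ℂ) → (G × S → ℂ) → (G × S → ℂ))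
    (hmul : ∀ x y : G × S → ℂ, ∀ c : G, ∀ u : S,
      mul x y (c, u) =
        ∑ b : G, (α (c * b⁻¹) b u : ℂ) * x (c * b⁻¹, act u b⁻¹) * y (b, u))
    (one : G × S → ℂ) (hone : ∀ a : G, ∀ s : S, one (a, s) = if a = 1 then 1 else 0) :
    (∀ x y z : G × S → ℂ, mul (mul x y) z = mul x (mul y z)) ∧
      (∀ x : G × S → ℂ, mul one x = x) ∧ ∀ x : G × S → ℂ, mul x one = x := by
  refine ⟨?_, ?_, ?_⟩
  · intro x y z
    funext p
    obtain ⟨c, u⟩ := p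
    rw [hmul, hmul]
    simp only [hmul, Finset.sum_mul, Finset.mul_sum]
    conv_rhs => rw [Finset.sum_comm]
    refine Finset.sum_congr rfl fun b _ => ?_
    refine Fintype.sum_equiv (Equiv.mulRight b) _ _ fun d => ?_
    simp only [Equiv.coe_mulRight, mul_inv_rev, ← mul_assoc, mul_inv_cancel_right,
      ← hactm]
    have key := hcoc (c * b⁻¹ * d⁻¹) d b u
    simp only [inv_mul_cancel_right] at key
    have key' := congrArg Units.val key
    push_cast at key'
    linear_combination
      (x (c * b⁻¹ * d⁻¹, act (act u b⁻¹) d⁻¹) * y (d, act u b⁻¹) * z (b, u)) * key'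
  · intro x
    funext p
    obtain ⟨c, u⟩ := p
    rw [hmul]
    rw [Finset.sum_eq_single c]
    · simp [hone, hnorml]
    · intro b _ hb
      rw [hone]
      have : c * b⁻¹ ≠ 1 := by
        intro h
        exact hb (by rwa [mul_inv_eq_one, eq_comm] at h)
      simp [this]
    · intro h; exact absurd (Finset.mem_univ c) h
  · intro x
    funext p
    obtain ⟨c, u⟩ := p
    rw [hmul]
    rw [Finset.sum_eq_single 1]
    · simp [hone, hnormr, hact1]
    · intro b _ hb
      simp [hone, hb]
    · intro h; exact absurd (Finset.mem_univ 1) h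
end

section
/- Let 𝒜_α(G,S) be the generalized twisted double associated to a finite group G, a finite right G-set S, and a normalized twisted 2-cocycle α. Fix s ∈ S and let G_s = {a ∈ G : s·a = s} be the stabilizer of s. Then the subspace S(s) = span{a ⊗ e_s : a ∈ G_s} is a subalgebra of 𝒜_α(G,S), the restriction of (a,b) ↦ α_s(a,b) to G_s × G_s is a 2-cocycle on G_s with values in ℂˣ, and S(s) is isomorphic as a ℂ-algebra to the twisted group algebra ℂ^{α_s}[G_s]. -/
/-- The product of the generalized twisted double `𝒜_α(G,S)` on `ℂ[G] ⊗ ℂ^S ≅ (G × S → ℂ)`: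
`(a ⊗ e_s)(b ⊗ e_t) = α_t(a,b) δ_{s·b, t} (ab ⊗ e_t)`. -/
noncomputable def gtdMul {G S : Type*} [Group G] [Fintype G]
    (act : S → G → S) (α : G → G → S → ℂˣ)
    (x y : G × S → ℂ) : G × S → ℂ :=
  fun cu => ∑ b : G, (α (cu.1 * b⁻¹) b cu.2 : ℂ) * x (cu.1 * b⁻¹, act cu.2 b⁻¹) * y (b, cu.2)

/-- The product of the twisted group algebra `ℂ^β[G]`: `ā·b̄ = β(a,b)·(ab)‾`. -/
noncomputable def tgaMul {G : Type*} [Group G] [Fintype G]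
    (β : G → G → ℂ) (x y : G → ℂ) : G → ℂ :=
  fun c => ∑ b : G, β (c * b⁻¹) b * x (c * b⁻¹) * y b

/-- The embedding of the twisted group algebra of the stabilizer of `s` into `𝒜_α(G,S)`,
sending `ā` to `a ⊗ e_s`. -/
noncomputable def stabEmb {G S : Type*} [DecidableEq S] (s : S) (x : G → ℂ) : G × S → ℂ :=
  fun au => if au.2 = s then x au.1 else 0

theorem gtd_stabilizer_subalgebra
    {G S : Type*} [Group G] [Fintype G] [Fintype S] [DecidableEq G] [DecidableEq S]
    (act : S → G → S) (hact1 : ∀ s, act s 1 = s)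
    (hactm : ∀ s a b, act (act s a) b = act s (a * b))
    (α : G → G → S → ℂˣ)
    (hcoc : ∀ a b c : G, ∀ s : S,
      α a b (act s c⁻¹) * α (a * b) c s = α a (b * c) s * α b c s)
    (hnorml : ∀ b : G, ∀ s : S, α 1 b s = 1)
    (hnormr : ∀ a : G, ∀ s : S, α a 1 s = 1)
    (s : S) :
    -- `S(s)` is closed under the product, hence a subalgebra
    (∀ x y : G × S → ℂ,
        (∀ a u, x (a, u) ≠ 0 → u = s ∧ act s a = s) →
        (∀ a u, y (a, u) ≠ 0 → u = s ∧ act s a = s) →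
        ∀ a u, gtdMul act α x y (a, u) ≠ 0 → u = s ∧ act s a = s) ∧
    -- `α_s` restricted to the stabilizer `G_s` is a 2-cocycle
    (∀ a b c : G, act s a = s → act s b = s → act s c = s →
        α a b s * α (a * b) c s = α a (b * c) s * α b c s) ∧
    -- `S(s)` is isomorphic to the twisted group algebra `ℂ^{α_s}[G_s]`,
    -- via the injective multiplicative linear map `stabEmb s` whose image is `S(s)`
    (∀ x y : G → ℂ,
        (∀ a, x a ≠ 0 → act s a = s) → (∀ a, y a ≠ 0 → act s a = s) →
        stabEmb s (tgaMul (fun a b => (α a b s : ℂ)) x y) =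
          gtdMul act α (stabEmb s x) (stabEmb s y)) ∧
    Function.Injective (stabEmb (G := G) s) ∧
    ∀ z : G × S → ℂ, (∀ a u, z (a, u) ≠ 0 → u = s ∧ act s a = s) →
      ∃ x : G → ℂ, (∀ a, x a ≠ 0 → act s a = s) ∧ stabEmb s x = z := by
  have hstab_inv : ∀ b : G, act s b = s → act s b⁻¹ = s := by
    intro b hb
    have := hactm s b b⁻¹
    rw [hb] at this
    rw [this, mul_inv_cancel, hact1]
  refine ⟨?_, ?_, ?_, ?_, ?_⟩
  · intro x y hx hy a u h
    simp only [gtdMul] at h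
    obtain ⟨b, -, hb⟩ := Finset.exists_ne_zero_of_sum_ne_zero h
    have h1 : x (a * b⁻¹, act u b⁻¹) ≠ 0 := fun h0 => hb (by simp [h0])
    have h2 : y (b, u) ≠ 0 := fun h0 => hb (by simp [h0])
    obtain ⟨hus, hbs⟩ := hy b u h2
    obtain ⟨hub, habs⟩ := hx (a * b⁻¹) (act u b⁻¹) h1
    refine ⟨hus, ?_⟩
    have : act s a = act (act s (a * b⁻¹)) b := by rw [hactm]; group
    rw [this, habs, hbs]
  · intro a b c ha hb hc
    have := hcoc a b c s
    rwa [hstab_inv c hc] at this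
  · intro x y hx hy
    funext au
    obtain ⟨a, u⟩ := au
    simp only [stabEmb, gtdMul, tgaMul]
    by_cases hu : u = s
    · subst hu
      simp only [if_pos rfl]
      refine Finset.sum_congr rfl fun b _ => ?_
      by_cases hb : act u b⁻¹ = u
      · simp [hb]
      · rw [if_neg hb]
        by_cases hyb : y b = 0
        · simp [hyb]
        · exact absurd (hstab_inv b (hy b hyb)) hb
    · simp [hu]
  · intro x y hxy
    funext a
    have := congrFun hxy (a, s)
    simpa [stabEmb] using this
  · intro z hz
    refine ⟨fun a => z (a, s), fun a ha => (hz a s ha).2, ?_⟩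
    funext au
    obtain ⟨a, u⟩ := au
    by_cases hu : u = s
    · subst hu; simp [stabEmb]
    · simp only [stabEmb, if_neg hu]
      by_cases h0 : z (a, u) = 0
      · exact h0.symm
      · exact absurd (hz a u h0).1 hu
end
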